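/- Let ℋ be a complex Hilbert space, H a bounded non-negative self-adjoint operator on ℋ, 𝔥 ⊆ ℋ a closed subspace with orthogonal projection P onto 𝔥, and K the compression of H to 𝔥. Let φ : [0,∞) → ℂ be a continuous admissible function and set C_p := sup_{x>0} |1 − φ(x)|/x (which is finite). For τ > 0 let F(τ) be the operator on 𝔥 given by F(τ)f = P(φ(τH)f) and S(τ) := (I_𝔥 − F(τ))/τ. Then for every t > 0 and every natural number n ≥ 1, ‖F(t/n)^n − exp(−tS(t/n))‖_{B(𝔥)} ≤ C_p · (t/√n) · ‖K‖_{B(𝔥)}. -/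

import Mathlib

open Filter Topology


lemma pois0 (r : ℝ) : ∑' k : ℕ, r ^ k / k.factorial = Real.exp r := by
  rw [Real.exp_eq_exp_ℝ, NormedSpace.exp_eq_tsum_div]

lemma pois1_aux (r : ℝ) : (fun k : ℕ => (((k:ℕ)+1 : ℕ) : ℝ) * (r ^ ((k:ℕ)+1) / ((k:ℕ)+1).factorial))
      = fun k : ℕ => r * (r ^ k / k.factorial) := by
  funext k
  rw [Nat.factorial_succ, pow_succ]
  push_cast
  have hk : (k.factorial : ℝ) ≠ 0 := by exact_mod_cast k.factorial_ne_zero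
  field_simp

lemma pois1_summ (r : ℝ) : Summable (fun k : ℕ => (k : ℝ) * (r ^ k / k.factorial)) := by
  rw [← summable_nat_add_iff 1]
  exact_mod_cast (pois1_aux r) ▸ (Real.summable_pow_div_factorial r).mul_left r

lemma pois1 (r : ℝ) : ∑' k : ℕ, (k : ℝ) * (r ^ k / k.factorial) = r * Real.exp r := by
  rw [Summable.tsum_eq_zero_add (pois1_summ r)]
  simp only [Nat.cast_zero, zero_mul, zero_add]
  have h2 : (fun b : ℕ => (↑(b + 1):ℝ) * (r ^ (b + 1) / ↑(b + 1).factorial))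
      = fun k : ℕ => r * (r ^ k / k.factorial) := by
    have := pois1_aux r; exact_mod_cast this
  rw [h2, tsum_mul_left, pois0]

lemma pois2_aux (r : ℝ) :
    (fun k : ℕ => ((((k:ℕ)+2:ℕ) : ℝ) * (((k:ℕ)+2:ℕ) - 1)) * (r ^ ((k:ℕ)+2) / ((k:ℕ)+2).factorial))
      = fun k : ℕ => r ^ 2 * (r ^ k / k.factorial) := by
  funext k
  have hk : (k.factorial : ℝ) ≠ 0 := by exact_mod_cast k.factorial_ne_zero
  rw [show k + 2 = k + 1 + 1 by ring, Nat.factorial_succ, Nat.factorial_succ]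
  push_cast
  field_simp
  ring

lemma pois2_summ (r : ℝ) :
    Summable (fun k : ℕ => ((k : ℝ) * ((k:ℝ) - 1)) * (r ^ k / k.factorial)) := by
  rw [← summable_nat_add_iff 2]
  exact_mod_cast (pois2_aux r) ▸ (Real.summable_pow_div_factorial r).mul_left (r ^ 2)

lemma pois2 (r : ℝ) :
    ∑' k : ℕ, ((k : ℝ) * ((k:ℝ) - 1)) * (r ^ k / k.factorial) = r ^ 2 * Real.exp r := by
  have hs := pois2_summ r
  have hs1 : Summable (fun k : ℕ => ((↑(k+1) : ℝ) * ((↑(k+1):ℝ) - 1)) * (r ^ (k+1) / (k+1).factorial)) := by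
    exact_mod_cast (summable_nat_add_iff 1).mpr hs
  rw [Summable.tsum_eq_zero_add hs, Summable.tsum_eq_zero_add hs1]
  simp only [Nat.cast_zero, Nat.cast_one, Nat.cast_add]
  have := pois2_aux r
  push_cast at this ⊢
  rw [show (fun k : ℕ => ((k:ℝ)+1+1) * ((k:ℝ)+1+1-1) * (r ^ (k+1+1) / ((k+1+1).factorial : ℝ)))
    = fun k : ℕ => r ^ 2 * (r ^ k / k.factorial) from by
      funext k
      have h2 := congrFun this k
      rw [show k+1+1 = k+2 by ring]
      rw [show ((k:ℝ)+1+1) * ((k:ℝ)+1+1-1) = ((k:ℝ)+2) * ((k:ℝ)+2-1) by ring]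
      exact h2]
  rw [tsum_mul_left, pois0]
  norm_num

lemma pois_var_summ (r : ℝ) :
    Summable (fun k : ℕ => (r - (k:ℝ)) ^ 2 * (r ^ k / k.factorial)) := by
  have h : (fun k : ℕ => (r - (k:ℝ)) ^ 2 * (r ^ k / k.factorial))
      = fun k : ℕ => ((k : ℝ) * ((k:ℝ) - 1)) * (r ^ k / k.factorial)
        + ((1 - 2*r) * ((k : ℝ) * (r ^ k / k.factorial))
        + r ^ 2 * (r ^ k / k.factorial)) := by
    funext k; ring
  rw [h]
  exact (pois2_summ r).add (((pois1_summ r).mul_left _).add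
    ((Real.summable_pow_div_factorial r).mul_left _))

lemma pois_var (r : ℝ) :
    ∑' k : ℕ, (r - (k:ℝ)) ^ 2 * (r ^ k / k.factorial) = r * Real.exp r := by
  have h : (fun k : ℕ => (r - (k:ℝ)) ^ 2 * (r ^ k / k.factorial))
      = fun k : ℕ => ((k : ℝ) * ((k:ℝ) - 1)) * (r ^ k / k.factorial)
        + ((1 - 2*r) * ((k : ℝ) * (r ^ k / k.factorial))
        + r ^ 2 * (r ^ k / k.factorial)) := by
    funext k; ring
  rw [h, Summable.tsum_add (pois2_summ r) (((pois1_summ r).mul_left _).add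
      ((Real.summable_pow_div_factorial r).mul_left _)),
    Summable.tsum_add ((pois1_summ r).mul_left _) ((Real.summable_pow_div_factorial r).mul_left _),
    tsum_mul_left, tsum_mul_left, pois0, pois1, pois2]
  ring

lemma pois_abs_summ (r : ℝ) (hr : 0 ≤ r) :
    Summable (fun k : ℕ => (r ^ k / k.factorial) * |r - (k:ℝ)|) := by
  have ha : ∀ k : ℕ, 0 ≤ r ^ k / k.factorial := fun k => by positivity
  refine Summable.of_nonneg_of_le (fun k => by positivity) (fun k => ?_)
    (((Real.summable_pow_div_factorial r).mul_left r).add (pois1_summ r))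
  have : |r - (k:ℝ)| ≤ r + k := by
    rw [abs_le]; constructor <;> nlinarith [Nat.cast_nonneg (α := ℝ) k]
  calc (r ^ k / k.factorial) * |r - (k:ℝ)| ≤ (r ^ k / k.factorial) * (r + k) :=
        mul_le_mul_of_nonneg_left this (ha k)
    _ = r * (r ^ k / k.factorial) + (k:ℝ) * (r ^ k / k.factorial) := by ring

lemma pois_abs (r : ℝ) (hr : 0 ≤ r) :
    ∑' k : ℕ, (r ^ k / k.factorial) * |r - (k:ℝ)| ≤ Real.sqrt r * Real.exp r := by
  have ha : ∀ k : ℕ, 0 ≤ r ^ k / k.factorial := fun k => by positivity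
  have hsum := pois_abs_summ r hr
  refine Summable.tsum_le_of_sum_le hsum fun s => ?_
  have key : (∑ k ∈ s, (r ^ k / k.factorial) * |r - (k:ℝ)|) ^ 2 ≤
      (∑ k ∈ s, r ^ k / k.factorial) * ∑ k ∈ s, (r - (k:ℝ)) ^ 2 * (r ^ k / k.factorial) := by
    apply Finset.sum_sq_le_sum_mul_sum_of_sq_eq_mul s (fun k _ => ha k)
      (fun k _ => by positivity)
    intro k _
    rw [mul_pow, sq_abs]
    ring
  have h1 : (∑ k ∈ s, r ^ k / k.factorial) ≤ Real.exp r := by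
    rw [← pois0]
    exact Summable.sum_le_tsum s (fun k _ => ha k) (Real.summable_pow_div_factorial r)
  have h2 : (∑ k ∈ s, (r - (k:ℝ)) ^ 2 * (r ^ k / k.factorial)) ≤ r * Real.exp r := by
    rw [← pois_var]
    exact Summable.sum_le_tsum s (fun k _ => by positivity) (pois_var_summ r)
  have hx : (0:ℝ) ≤ ∑ k ∈ s, (r ^ k / k.factorial) * |r - (k:ℝ)| :=
    Finset.sum_nonneg fun k _ => by positivity
  have h2' : (0:ℝ) ≤ ∑ k ∈ s, (r - (k:ℝ)) ^ 2 * (r ^ k / k.factorial) :=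
    Finset.sum_nonneg fun k _ => by positivity
  have hkey2 : (∑ k ∈ s, (r ^ k / k.factorial) * |r - (k:ℝ)|) ^ 2 ≤
      Real.exp r * (r * Real.exp r) := by
    calc _ ≤ _ := key
      _ ≤ Real.exp r * (r * Real.exp r) := by
          apply mul_le_mul h1 h2 h2' (Real.exp_pos r).le
  have hs2 := Real.sqrt_le_sqrt hkey2
  rw [Real.sqrt_sq hx] at hs2
  have heq : Real.sqrt (Real.exp r * (r * Real.exp r)) = Real.sqrt r * Real.exp r := by
    rw [show Real.exp r * (r * Real.exp r) = r * (Real.exp r) ^ 2 by ring,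
      Real.sqrt_mul hr, Real.sqrt_sq (Real.exp_pos r).le]
  rw [heq] at hs2
  exact hs2

open NormedSpace in
lemma chernoff_bound {A : Type*} [NormedRing A] [NormedAlgebra ℂ A] [CompleteSpace A]
    (hone : ‖(1:A)‖ ≤ 1) (C : A) (hC : ‖C‖ ≤ 1) (n : ℕ) :
    ‖C ^ n - NormedSpace.exp ((n : ℂ) • (C - 1))‖ ≤ Real.sqrt n * ‖1 - C‖ := by
  have hpow : ∀ k : ℕ, ‖C ^ k‖ ≤ 1 := by
    intro k
    induction k with
    | zero => simpa using hone
    | succ m ih =>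
      calc ‖C ^ (m+1)‖ = ‖C ^ m * C‖ := by rw [pow_succ]
        _ ≤ ‖C ^ m‖ * ‖C‖ := norm_mul_le _ _
        _ ≤ 1 := mul_le_one₀ ih (norm_nonneg _) hC
  have hdiff1 : ∀ m : ℕ, ‖C ^ m - 1‖ ≤ m * ‖1 - C‖ := by
    intro m
    induction m with
    | zero => simp
    | succ m ih =>
      have hid : C ^ (m+1) - 1 = C ^ m * (C - 1) + (C ^ m - 1) := by
        rw [pow_succ]; noncomm_ring
      calc ‖C ^ (m+1) - 1‖ = ‖C ^ m * (C - 1) + (C ^ m - 1)‖ := by rw [hid]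
        _ ≤ ‖C ^ m * (C - 1)‖ + ‖C ^ m - 1‖ := norm_add_le _ _
        _ ≤ ‖C ^ m‖ * ‖C - 1‖ + m * ‖1 - C‖ := add_le_add (norm_mul_le _ _) ih
        _ ≤ 1 * ‖1 - C‖ + m * ‖1 - C‖ := by
            rw [norm_sub_rev C 1]
            exact add_le_add_left (mul_le_mul_of_nonneg_right (hpow m) (norm_nonneg _)) _
        _ = (m + 1 : ℕ) * ‖1 - C‖ := by push_cast; ring
  have hdiff : ∀ j k : ℕ, ‖C ^ j - C ^ k‖ ≤ |(j:ℝ) - k| * ‖1 - C‖ := by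
    have key : ∀ j k : ℕ, k ≤ j → ‖C ^ j - C ^ k‖ ≤ |(j:ℝ) - k| * ‖1 - C‖ := by
      intro j k hkj
      have hid : C ^ j - C ^ k = C ^ k * (C ^ (j - k) - 1) := by
        rw [mul_sub, mul_one, ← pow_add, Nat.add_sub_cancel' hkj]
      calc ‖C ^ j - C ^ k‖ = ‖C ^ k * (C ^ (j-k) - 1)‖ := by rw [hid]
        _ ≤ ‖C ^ k‖ * ‖C ^ (j-k) - 1‖ := norm_mul_le _ _
        _ ≤ 1 * ((j - k : ℕ) * ‖1 - C‖) :=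
            mul_le_mul (hpow k) (hdiff1 _) (norm_nonneg _) zero_le_one
        _ = |(j:ℝ) - k| * ‖1 - C‖ := by
            rw [one_mul, Nat.cast_sub hkj, abs_of_nonneg (by
              have : (k:ℝ) ≤ j := by exact_mod_cast hkj
              linarith)]
    intro j k
    rcases le_total k j with h | h
    · exact key j k h
    · rw [norm_sub_rev, abs_sub_comm]
      exact key k j h
  -- coefficients
  set c : ℕ → ℂ := fun k => Complex.exp (-(n:ℂ)) * ((n:ℂ) ^ k / k.factorial) with hc
  have hcnorm : ∀ k, ‖c k‖ = Real.exp (-(n:ℝ)) * ((n:ℝ) ^ k / k.factorial) := by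
    intro k
    simp [hc, Complex.norm_exp, norm_div, norm_pow]
  have hcsum : Summable c := (expSeries_div_summable (n:ℂ)).mul_left _
  have hXsum : Summable (fun k : ℕ => ((n:ℂ) ^ k / k.factorial) • C ^ k) := by
    apply Summable.of_norm_bounded (Real.summable_pow_div_factorial (n:ℝ))
    intro k
    rw [norm_smul]
    calc ‖((n:ℂ) ^ k / (k.factorial:ℂ))‖ * ‖C ^ k‖ ≤ ‖((n:ℂ) ^ k / (k.factorial:ℂ))‖ * 1 :=
        mul_le_mul_of_nonneg_left (hpow k) (norm_nonneg _)
      _ = (n:ℝ) ^ k / k.factorial := by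
        simp [norm_div, norm_pow]
  have hE : NormedSpace.exp ((n : ℂ) • (C - 1)) = ∑' k : ℕ, c k • C ^ k := by
    have hsplit : (n : ℂ) • (C - 1) = (n:ℂ) • C + (-(n:ℂ)) • 1 := by
      rw [smul_sub, sub_eq_add_neg, neg_smul]
    have hcomm : Commute ((n:ℂ) • C) ((-(n:ℂ)) • (1:A)) :=
      ((Commute.one_right C).smul_left _).smul_right _
    rw [hsplit, exp_add_of_commute_of_mem_ball (𝕂 := ℂ) hcomm
      ((expSeries_radius_eq_top ℂ A).symm ▸ edist_lt_top _ _)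
      ((expSeries_radius_eq_top ℂ A).symm ▸ edist_lt_top _ _)]
    have h1 : NormedSpace.exp ((-(n:ℂ)) • (1:A)) = Complex.exp (-(n:ℂ)) • 1 := by
      rw [← Algebra.algebraMap_eq_smul_one, ← algebraMap_exp_comm,
        Complex.exp_eq_exp_ℂ, Algebra.algebraMap_eq_smul_one]
    have h2 : NormedSpace.exp ((n:ℂ) • C) = ∑' k : ℕ, ((n:ℂ) ^ k / k.factorial) • C ^ k := by
      rw [exp_eq_tsum (𝕂 := ℂ)]
      exact tsum_congr fun k => by rw [smul_pow, smul_smul, div_eq_inv_mul]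
    rw [h1, h2, mul_smul_comm, mul_one, ← Summable.tsum_const_smul _ hXsum]
    exact tsum_congr fun k => by rw [smul_smul]
  have htsumc : ∑' k : ℕ, c k = 1 := by
    rw [hc, tsum_mul_left]
    have h3 : ∑' k : ℕ, ((n:ℂ) ^ k / (k.factorial:ℂ)) = Complex.exp (n:ℂ) := by
      rw [Complex.exp_eq_exp_ℂ, exp_eq_tsum_div]
    rw [h3, ← Complex.exp_add]
    simp
  have hCn : C ^ n = ∑' k : ℕ, c k • C ^ n := by
    rw [Summable.tsum_smul_const hcsum, htsumc, one_smul]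
  have hXsum' : Summable (fun k : ℕ => c k • C ^ k) := by
    have h4 : (fun k : ℕ => c k • C ^ k)
        = fun k => Complex.exp (-(n:ℂ)) • (((n:ℂ) ^ k / k.factorial) • C ^ k) := by
      funext k; rw [smul_smul]
    rw [h4]; exact hXsum.const_smul _
  have hYsum : Summable (fun k : ℕ => c k • C ^ n) := hcsum.smul_const _
  have hdiffsum : C ^ n - NormedSpace.exp ((n:ℂ) • (C - 1))
      = ∑' k : ℕ, c k • (C ^ n - C ^ k) := by
    rw [hE]
    nth_rewrite 1 [hCn]
    rw [← Summable.tsum_sub hYsum hXsum']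
    exact tsum_congr fun k => (smul_sub _ _ _).symm
  have hbig : Summable (fun k : ℕ =>
      (Real.exp (-(n:ℝ)) * ‖1 - C‖) * (((n:ℝ) ^ k / k.factorial) * |(n:ℝ) - k|)) :=
    (pois_abs_summ (n:ℝ) (Nat.cast_nonneg n)).mul_left _
  have hle : ∀ k : ℕ, ‖c k • (C ^ n - C ^ k)‖ ≤
      (Real.exp (-(n:ℝ)) * ‖1 - C‖) * (((n:ℝ) ^ k / k.factorial) * |(n:ℝ) - k|) := by
    intro k
    rw [norm_smul, hcnorm]
    have h5 : Real.exp (-(n:ℝ)) * ((n:ℝ) ^ k / k.factorial) * ‖C ^ n - C ^ k‖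
        ≤ Real.exp (-(n:ℝ)) * ((n:ℝ) ^ k / k.factorial) * (|(n:ℝ) - k| * ‖1 - C‖) :=
      mul_le_mul_of_nonneg_left (hdiff n k) (by positivity)
    calc Real.exp (-(n:ℝ)) * ((n:ℝ) ^ k / k.factorial) * ‖C ^ n - C ^ k‖
        ≤ Real.exp (-(n:ℝ)) * ((n:ℝ) ^ k / k.factorial) * (|(n:ℝ) - k| * ‖1 - C‖) := h5
      _ = (Real.exp (-(n:ℝ)) * ‖1 - C‖) * (((n:ℝ) ^ k / k.factorial) * |(n:ℝ) - k|) := by ring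
  have hnormsum : Summable (fun k : ℕ => ‖c k • (C ^ n - C ^ k)‖) :=
    Summable.of_nonneg_of_le (fun k => norm_nonneg _) hle hbig
  rw [hdiffsum]
  calc ‖∑' k : ℕ, c k • (C ^ n - C ^ k)‖ ≤ ∑' k : ℕ, ‖c k • (C ^ n - C ^ k)‖ :=
      norm_tsum_le_tsum_norm hnormsum
    _ ≤ ∑' k : ℕ, (Real.exp (-(n:ℝ)) * ‖1 - C‖) * (((n:ℝ) ^ k / k.factorial) * |(n:ℝ) - k|) :=
      Summable.tsum_le_tsum hle hnormsum hbig
    _ = (Real.exp (-(n:ℝ)) * ‖1 - C‖) * ∑' k : ℕ, ((n:ℝ) ^ k / k.factorial) * |(n:ℝ) - k| :=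
      tsum_mul_left
    _ ≤ (Real.exp (-(n:ℝ)) * ‖1 - C‖) * (Real.sqrt (n:ℝ) * Real.exp (n:ℝ)) :=
      mul_le_mul_of_nonneg_left (pois_abs (n:ℝ) (Nat.cast_nonneg n)) (by positivity)
    _ = (Real.exp (-(n:ℝ)) * Real.exp (n:ℝ)) * (Real.sqrt (n:ℝ) * ‖1 - C‖) := by ring
    _ = Real.sqrt (n:ℝ) * ‖1 - C‖ := by rw [← Real.exp_add]; simp

set_option maxHeartbeats 1000000
set_option synthInstance.maxHeartbeats 400000

/-- **Chernoff's √n-estimate** (3.8)–(3.10) in the proof of Corollary 3.2 (bounded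
case). The closed subspace `𝔥 ⊆ ℋ` is modelled by a Hilbert space `𝔥` with a linear
isometric embedding `J : 𝔥 → ℋ`; `P = J*` is the orthogonal projection onto `𝔥`,
characterized by `⟪P g, f⟫ = ⟪g, J f⟫`. For a bounded non-negative self-adjoint `H`,
compression `K = P H J`, a continuous admissible `φ`, `C_p = sup_{x>0} |1 - φ(x)|/x`,
`F(τ) = P φ(τH) P` and `S(τ) = τ⁻¹(I - F(τ))`, one has
`‖F(t/n)ⁿ - exp(-t S(t/n))‖ ≤ C_p (t/√n) ‖K‖` for every `t > 0` and `n ≥ 1`. -/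
theorem zeno_chernoff_sqrt_estimate
    {ℋ : Type*} [NormedAddCommGroup ℋ] [InnerProductSpace ℂ ℋ] [CompleteSpace ℋ]
    {𝔥 : Type*} [NormedAddCommGroup 𝔥] [InnerProductSpace ℂ 𝔥] [CompleteSpace 𝔥]
    (J : 𝔥 →ₗᵢ[ℂ] ℋ) (P : ℋ →L[ℂ] 𝔥)
    (hP : ∀ (g : ℋ) (f : 𝔥), (inner ℂ (P g) f : ℂ) = inner ℂ g (J f))
    (Hop : ℋ →L[ℂ] ℋ) (hsa : IsSelfAdjoint Hop)
    (hpos : ∀ g : ℋ, 0 ≤ (inner ℂ (Hop g) g : ℂ).re)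
    (K : 𝔥 →L[ℂ] 𝔥) (hK : ∀ f : 𝔥, K f = P (Hop (J f)))
    (φ : ℝ → ℂ) (hφc : Continuous φ)
    (hφb : ∀ x : ℝ, 0 ≤ x → ‖φ x‖ ≤ 1) (hφ0 : φ 0 = 1)
    (hφd : Tendsto (fun x : ℝ => (φ x - 1) / (x : ℂ)) (𝓝[>] 0) (𝓝 (-Complex.I)))
    (Cp : ℝ) (hCp : Cp = sSup ((fun x : ℝ => ‖1 - φ x‖ / x) '' Set.Ioi 0))
    (F : ℝ → (𝔥 →L[ℂ] 𝔥))
    (hF : ∀ (τ : ℝ) (f : 𝔥),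
      F τ f = P (cfc (fun z : ℂ => φ (τ * z.re)) Hop (J f)))
    (S : ℝ → (𝔥 →L[ℂ] 𝔥))
    (hS : ∀ τ : ℝ, 0 < τ → S τ = (τ⁻¹ : ℝ) • (1 - F τ)) :
    ∀ t : ℝ, 0 < t → ∀ n : ℕ, 1 ≤ n →
      ‖(F (t / n)) ^ n - NormedSpace.exp ((-(t : ℂ)) • S (t / n))‖ ≤
        Cp * (t / Real.sqrt n) * ‖K‖ := by
  -- basic setup
  set Jc : 𝔥 →L[ℂ] ℋ := J.toContinuousLinearMap with hJc
  have hJcapp : ∀ f : 𝔥, Jc f = J f := fun f => rfl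
  have hPadj : P = ContinuousLinearMap.adjoint Jc :=
    (ContinuousLinearMap.eq_adjoint_iff P Jc).mpr (fun x y => hP x y)
  have hPJ : ∀ f : 𝔥, P (J f) = f := by
    intro f
    apply ext_inner_right ℂ
    intro y
    rw [hP, J.inner_map_map]
  -- spectrum facts
  have hpos' : Hop.IsPositive := by
    refine ⟨hsa.isSymmetric, fun x => ?_⟩
    exact hpos x
  have hHnn : (0 : ℋ →L[ℂ] ℋ) ≤ Hop := (ContinuousLinearMap.nonneg_iff_isPositive Hop).mpr hpos'
  have hspec : ∀ z ∈ spectrum ℂ Hop, z.im = 0 ∧ 0 ≤ z.re := by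
    intro z hz
    have him : z = (z.re : ℂ) := hsa.mem_spectrum_eq_re hz
    constructor
    · rw [him]; exact Complex.ofReal_im _
    · have hr : z.re ∈ spectrum ℝ Hop := by
        rw [← spectrum.algebraMap_mem_iff ℂ]
        simpa [Complex.coe_algebraMap] using him ▸ hz
      exact spectrum_nonneg_of_nonneg hHnn hr
  -- Cp facts
  have hratio_eq : ∀ x : ℝ, 0 < x → ‖1 - φ x‖ / x = ‖(φ x - 1) / (x : ℂ)‖ := by
    intro x hx
    rw [norm_div, Complex.norm_real, Real.norm_of_nonneg hx.le, norm_sub_rev]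
  have hCb : BddAbove ((fun x : ℝ => ‖1 - φ x‖ / x) '' Set.Ioi 0) := by
    have hd := hφd
    rw [Metric.tendsto_nhdsWithin_nhds] at hd
    obtain ⟨δ, hδ, hδ'⟩ := hd 1 one_pos
    refine ⟨max 2 (2 / δ), ?_⟩
    rintro y ⟨x, hx, rfl⟩
    simp only [Set.mem_Ioi] at hx
    show ‖1 - φ x‖ / x ≤ max 2 (2 / δ)
    rcases lt_or_ge x δ with h | h
    · have := hδ' hx (by simpa [Real.dist_eq, abs_of_pos hx] using h)
      rw [dist_eq_norm] at this
      have h2 : ‖(φ x - 1) / (x:ℂ)‖ ≤ 2 := by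
        have h3 := norm_sub_norm_le ((φ x - 1) / (x:ℂ)) (-Complex.I)
        simp only [norm_neg, Complex.norm_I] at h3
        linarith
      rw [hratio_eq x hx]
      exact le_max_of_le_left h2
    · have h2 : ‖1 - φ x‖ ≤ 2 := by
        have := hφb x hx.le
        have h3 := norm_sub_le (1 : ℂ) (φ x)
        simp only [norm_one] at h3
        linarith
      refine le_max_of_le_right ?_
      calc ‖1 - φ x‖ / x ≤ 2 / x := by gcongr
        _ ≤ 2 / δ := by gcongr
  have hCple : ∀ x : ℝ, 0 < x → ‖1 - φ x‖ / x ≤ Cp := by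
    intro x hx
    rw [hCp]
    exact le_csSup hCb ⟨x, hx, rfl⟩
  have hCp1 : 1 ≤ Cp := by
    have hratio : Tendsto (fun x : ℝ => ‖1 - φ x‖ / x) (𝓝[>] 0) (𝓝 1) := by
      have h1 : Tendsto (fun x : ℝ => ‖(φ x - 1) / (x:ℂ)‖) (𝓝[>] 0) (𝓝 ‖-Complex.I‖) :=
        hφd.norm
      simp only [norm_neg, Complex.norm_I] at h1
      apply h1.congr'
      filter_upwards [self_mem_nhdsWithin] with x hx
      exact (hratio_eq x hx).symm
    exact le_of_tendsto hratio (by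
      filter_upwards [self_mem_nhdsWithin] with x hx
      exact hCple x hx)
  have hCp0 : 0 ≤ Cp := zero_le_one.trans hCp1
  -- norms of P and J
  have hJnorm : ‖Jc‖ ≤ 1 := J.norm_toContinuousLinearMap_le
  have hPnorm : ‖P‖ ≤ 1 := by
    rw [hPadj]
    calc ‖ContinuousLinearMap.adjoint Jc‖ = ‖Jc‖ := by
          exact (ContinuousLinearMap.adjoint : (𝔥 →L[ℂ] ℋ) ≃ₗᵢ⋆[ℂ] _).norm_map Jc
      _ ≤ 1 := hJnorm
  haveI hnormal : IsStarNormal Hop := hsa.isStarNormal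
  -- contraction property
  have hFnorm : ∀ τ : ℝ, 0 ≤ τ → ‖F τ‖ ≤ 1 := by
    intro τ hτ
    have hcomp : F τ = P ∘L ((cfc (fun z : ℂ => φ (τ * z.re)) Hop) ∘L Jc) := by
      ext f
      simp only [ContinuousLinearMap.comp_apply]
      rw [hF τ f, hJcapp]
    rw [hcomp]
    have hcfc : ‖cfc (fun z : ℂ => φ (τ * z.re)) Hop‖ ≤ 1 :=
      norm_cfc_le zero_le_one fun z hz => hφb _ (mul_nonneg hτ (hspec z hz).2)
    calc ‖P ∘L ((cfc (fun z : ℂ => φ (τ * z.re)) Hop) ∘L Jc)‖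
        ≤ ‖P‖ * ‖(cfc (fun z : ℂ => φ (τ * z.re)) Hop) ∘L Jc‖ :=
          ContinuousLinearMap.opNorm_comp_le _ _
      _ ≤ ‖P‖ * (‖cfc (fun z : ℂ => φ (τ * z.re)) Hop‖ * ‖Jc‖) :=
          mul_le_mul_of_nonneg_left (ContinuousLinearMap.opNorm_comp_le _ _) (norm_nonneg P)
      _ ≤ 1 * (1 * 1) := by
          apply mul_le_mul hPnorm _ (by positivity) zero_le_one
          exact mul_le_mul hcfc hJnorm (norm_nonneg _) zero_le_one
      _ = 1 := by norm_num
  -- the key bound on ‖1 - F τ‖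
  have h1Fb : ∀ τ : ℝ, 0 < τ → ‖1 - F τ‖ ≤ Cp * (τ * ‖K‖) := by
    intro τ hτ
    set g : ℝ → ℂ := fun x => if 0 < x then (1 - φ (τ * x)) / ((τ * x : ℝ) : ℂ) else Complex.I
      with hg
    set mfun : ℂ → ℂ := fun z => g z.re with hmfun
    set sqf : ℂ → ℂ := fun z => ((Real.sqrt (τ * z.re) : ℝ) : ℂ) with hsqf
    have hsqcont : Continuous sqf :=
      Complex.continuous_ofReal.comp
        (Real.continuous_sqrt.comp (continuous_const.mul Complex.continuous_re))
    have hsqc : ContinuousOn sqf (spectrum ℂ Hop) := hsqcont.continuousOn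
    -- continuity of mfun on the spectrum
    have htau : Tendsto (fun x : ℝ => τ * x) (𝓝[>] 0) (𝓝[>] 0) := by
      apply tendsto_nhdsWithin_of_tendsto_nhds_of_eventually_within
      · have h1 : Tendsto (fun x : ℝ => τ * x) (𝓝 0) (𝓝 0) := by
          have := (continuous_mul_left τ).tendsto (0:ℝ); rwa [mul_zero] at this
        exact h1.mono_left nhdsWithin_le_nhds
      · filter_upwards [self_mem_nhdsWithin] with x hx
        exact mul_pos hτ hx
    have hlim : Tendsto g (𝓝[>] (0:ℝ)) (𝓝 Complex.I) := by
      have h1 : Tendsto (fun x : ℝ => (φ (τ*x) - 1) / ((τ*x : ℝ) : ℂ)) (𝓝[>] 0)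
          (𝓝 (-Complex.I)) := hφd.comp htau
      have h2 := h1.neg
      rw [neg_neg] at h2
      apply h2.congr'
      filter_upwards [self_mem_nhdsWithin] with x hx
      simp only [Set.mem_Ioi] at hx
      simp only [hg]
      rw [if_pos hx, ← neg_div, neg_sub]
    have hgc : ContinuousWithinAt g (Set.Ici 0) 0 := by
      have hg0 : g 0 = Complex.I := by simp [hg]
      rw [ContinuousWithinAt, hg0,
        show Set.Ici (0:ℝ) = {0} ∪ Set.Ioi 0 by
          rw [Set.union_comm, Set.Ioi_union_left],
        nhdsWithin_union, tendsto_sup]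
      exact ⟨by rw [nhdsWithin_singleton]; exact hg0 ▸ tendsto_pure_nhds g 0, hlim⟩
    have hmcont : ContinuousOn mfun (spectrum ℂ Hop) := by
      intro z hz
      obtain ⟨him, hre⟩ := hspec z hz
      rcases hre.lt_or_eq with h0 | h0
      · apply ContinuousAt.continuousWithinAt
        have hopen : IsOpen {w : ℂ | 0 < w.re} := isOpen_lt continuous_const Complex.continuous_re
        have hev : (fun w : ℂ => (1 - φ (τ * w.re)) / ((τ * w.re : ℝ) : ℂ)) =ᶠ[𝓝 z] mfun := by
          filter_upwards [hopen.mem_nhds h0] with w hw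
          simp only [hmfun, hg]
          rw [if_pos hw]
        apply ContinuousAt.congr _ hev
        apply ContinuousAt.div
        · exact (continuous_const.sub
            (hφc.comp (continuous_const.mul Complex.continuous_re))).continuousAt
        · exact (Complex.continuous_ofReal.comp
            (continuous_const.mul Complex.continuous_re)).continuousAt
        · exact Complex.ofReal_ne_zero.mpr (mul_pos hτ h0).ne'
      · have hz0 : z = 0 := by
          apply Complex.ext
          · exact h0.symm
          · exact him
        rw [hz0]
        have hmaps : Set.MapsTo Complex.re (spectrum ℂ Hop) (Set.Ici 0) :=
          fun w hw => (hspec w hw).2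
        have h1 : ContinuousWithinAt (g ∘ Complex.re) (spectrum ℂ Hop) 0 := by
          apply ContinuousWithinAt.comp (by simpa using hgc)
            Complex.continuous_re.continuousWithinAt hmaps
        exact h1
    -- operators
    set φτOp := cfc (fun z : ℂ => φ (τ * z.re)) Hop with hφτOp
    set mOp := cfc mfun Hop with hmOp
    set sqOp := cfc sqf Hop with hsqOp
    have hmnorm : ‖mOp‖ ≤ Cp := by
      apply norm_cfc_le hCp0
      intro z hz
      obtain ⟨him, hre⟩ := hspec z hz
      simp only [hmfun, hg]
      rcases hre.lt_or_eq with h0 | h0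
      · rw [if_pos h0, norm_div, Complex.norm_real,
          Real.norm_of_nonneg (mul_pos hτ h0).le]
        exact hCple (τ * z.re) (mul_pos hτ h0)
      · rw [if_neg (by rw [← h0]; exact lt_irrefl 0), Complex.norm_I]
        exact hCp1
    have hsqsa : IsSelfAdjoint sqOp := by
      have h1 : (fun z : ℂ => star (sqf z)) = sqf := by
        funext z
        simp [hsqf, Complex.star_def, Complex.conj_ofReal]
      have h2 := cfc_star sqf Hop
      rw [h1] at h2
      exact h2.symm
    -- factorization
    have hkey : (spectrum ℂ Hop).EqOn (fun z => sqf z * (mfun z * sqf z))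
        (fun z : ℂ => 1 - φ (τ * z.re)) := by
      intro z hz
      obtain ⟨him, hre⟩ := hspec z hz
      simp only [hmfun, hg, hsqf]
      rcases hre.lt_or_eq with h0 | h0
      · rw [if_pos h0]
        have hd : (0:ℝ) < τ * z.re := mul_pos hτ h0
        have hss : ((Real.sqrt (τ * z.re) : ℝ) : ℂ) * ((Real.sqrt (τ * z.re) : ℝ) : ℂ)
            = ((τ * z.re : ℝ) : ℂ) := by
          rw [← Complex.ofReal_mul, Real.mul_self_sqrt hd.le]
        have hne : ((τ * z.re : ℝ) : ℂ) ≠ 0 := Complex.ofReal_ne_zero.mpr hd.ne'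
        have hre2 : ((Real.sqrt (τ * z.re) : ℝ) : ℂ) *
            ((1 - φ (τ * z.re)) / ((τ * z.re : ℝ) : ℂ) * ((Real.sqrt (τ * z.re) : ℝ) : ℂ))
            = ((Real.sqrt (τ * z.re) : ℝ) : ℂ) * ((Real.sqrt (τ * z.re) : ℝ) : ℂ)
              * ((1 - φ (τ * z.re)) / ((τ * z.re : ℝ) : ℂ)) := by ring
        rw [hre2, hss, mul_comm, div_mul_cancel₀ _ hne]
      · rw [← h0]
        simp [hφ0]
    have hfac : cfc (fun z : ℂ => 1 - φ (τ * z.re)) Hop = sqOp * (mOp * sqOp) := by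
      rw [hsqOp, hmOp, ← cfc_mul mfun sqf Hop hmcont hsqc,
        ← cfc_mul sqf (fun x => mfun x * sqf x) Hop hsqc (hmcont.mul hsqc)]
      exact (cfc_congr hkey).symm
    have hsub : cfc (fun z : ℂ => 1 - φ (τ * z.re)) Hop = 1 - φτOp := by
      rw [cfc_sub (fun _ : ℂ => (1:ℂ)) (fun z : ℂ => φ (τ * z.re)) Hop
          continuousOn_const ((hφc.comp (continuous_const.mul Complex.continuous_re)).continuousOn),
        cfc_const (1:ℂ) Hop, map_one]
    set B : 𝔥 →L[ℂ] ℋ := sqOp ∘L Jc with hB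
    have hBadj : ContinuousLinearMap.adjoint B = P ∘L sqOp := by
      rw [hB, ContinuousLinearMap.adjoint_comp, ← hPadj,
        ← ContinuousLinearMap.star_eq_adjoint, hsqsa.star_eq]
    have h1F : 1 - F τ = (ContinuousLinearMap.adjoint B) ∘L (mOp ∘L B) := by
      ext f
      rw [hBadj]
      simp only [ContinuousLinearMap.comp_apply, ContinuousLinearMap.sub_apply,
        ContinuousLinearMap.one_apply]
      rw [hF τ f]
      have h2 : sqOp (mOp (B f)) = (sqOp * (mOp * sqOp)) (Jc f) := rfl
      rw [h2, ← hfac, hsub]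
      simp only [ContinuousLinearMap.sub_apply, ContinuousLinearMap.one_apply, map_sub]
      rw [hJcapp, hPJ]
    have hsqsq : sqOp * sqOp = (τ:ℂ) • Hop := by
      rw [hsqOp, ← cfc_mul sqf sqf Hop hsqc hsqc]
      have heq : (spectrum ℂ Hop).EqOn (fun z => sqf z * sqf z) ((τ:ℂ) * ·) := by
        intro z hz
        obtain ⟨him, hre⟩ := hspec z hz
        simp only [hsqf]
        show ((Real.sqrt (τ * z.re) : ℝ) : ℂ) * ((Real.sqrt (τ * z.re) : ℝ) : ℂ) = (τ:ℂ) * z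
        rw [← Complex.ofReal_mul, Real.mul_self_sqrt (mul_nonneg hτ.le hre),
          Complex.ofReal_mul]
        congr 1
        exact (hsa.mem_spectrum_eq_re hz).symm
      rw [cfc_congr heq]
      exact cfc_const_mul_id (τ:ℂ) Hop hnormal
    have hBBadj : (ContinuousLinearMap.adjoint B) ∘L B = (τ:ℂ) • K := by
      rw [hBadj, hB]
      ext f
      simp only [ContinuousLinearMap.comp_apply, ContinuousLinearMap.smul_apply]
      have h3 : sqOp (sqOp (Jc f)) = (sqOp * sqOp) (Jc f) := rfl
      rw [h3, hsqsq]
      simp only [ContinuousLinearMap.smul_apply, map_smul]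
      rw [hJcapp, ← hK]
    have hBnorm : ‖B‖ * ‖B‖ = τ * ‖K‖ := by
      rw [← ContinuousLinearMap.norm_adjoint_comp_self B, hBBadj, norm_smul,
        Complex.norm_real, Real.norm_of_nonneg hτ.le]
    rw [h1F]
    have hadjn : ‖ContinuousLinearMap.adjoint B‖ = ‖B‖ :=
      (ContinuousLinearMap.adjoint : (𝔥 →L[ℂ] ℋ) ≃ₗᵢ⋆[ℂ] _).norm_map B
    calc ‖(ContinuousLinearMap.adjoint B) ∘L (mOp ∘L B)‖
        ≤ ‖ContinuousLinearMap.adjoint B‖ * ‖mOp ∘L B‖ :=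
          ContinuousLinearMap.opNorm_comp_le _ _
      _ ≤ ‖ContinuousLinearMap.adjoint B‖ * (‖mOp‖ * ‖B‖) :=
          mul_le_mul_of_nonneg_left (ContinuousLinearMap.opNorm_comp_le _ _) (norm_nonneg _)
      _ = ‖B‖ * (‖mOp‖ * ‖B‖) := by rw [hadjn]
      _ ≤ ‖B‖ * (Cp * ‖B‖) := by
          apply mul_le_mul_of_nonneg_left _ (norm_nonneg _)
          exact mul_le_mul_of_nonneg_right hmnorm (norm_nonneg _)
      _ = Cp * (‖B‖ * ‖B‖) := by ring
      _ = Cp * (τ * ‖K‖) := by rw [hBnorm]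
  -- final assembly
  intro t ht n hn
  have hn0 : (0:ℝ) < n := by exact_mod_cast Nat.lt_of_lt_of_le Nat.zero_lt_one hn
  set τ := t / n with hτdef
  have hτ : 0 < τ := div_pos ht hn0
  have harg : (-(t:ℂ)) • S τ = (n:ℂ) • (F τ - 1) := by
    rw [hS τ hτ]
    have h1 : (τ⁻¹:ℝ) • (1 - F τ) = ((τ⁻¹:ℝ):ℂ) • (1 - F τ) := by
      rw [show ((τ⁻¹:ℝ):ℂ) = algebraMap ℝ ℂ τ⁻¹ from rfl, algebraMap_smul]
    rw [h1, smul_smul]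
    have h2 : (-(t:ℂ)) * ((τ⁻¹:ℝ):ℂ) = -(n:ℂ) := by
      have h3 : t * τ⁻¹ = (n:ℝ) := by rw [hτdef]; field_simp
      calc (-(t:ℂ)) * ((τ⁻¹:ℝ):ℂ) = -(((t * τ⁻¹ : ℝ)):ℂ) := by push_cast; ring
        _ = -(n:ℂ) := by rw [h3]; simp
    rw [h2, neg_smul, ← smul_neg, neg_sub]
  rw [harg]
  have hone : ‖(1 : 𝔥 →L[ℂ] 𝔥)‖ ≤ 1 := by
    rw [ContinuousLinearMap.one_def]
    exact ContinuousLinearMap.norm_id_le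
  have hch := chernoff_bound hone (F τ) (hFnorm τ hτ.le) n
  refine hch.trans ?_
  have h1 := h1Fb τ hτ
  have hsn : (0:ℝ) < Real.sqrt n := Real.sqrt_pos.mpr hn0
  have hss : Real.sqrt n * Real.sqrt n = (n:ℝ) := Real.mul_self_sqrt hn0.le
  calc Real.sqrt n * ‖1 - F τ‖ ≤ Real.sqrt n * (Cp * (τ * ‖K‖)) :=
      mul_le_mul_of_nonneg_left h1 (Real.sqrt_nonneg _)
    _ = Cp * (t / Real.sqrt n) * ‖K‖ := by
        rw [hτdef, show (n:ℝ) = Real.sqrt n * Real.sqrt n from hss.symm]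
        field_simp
        linear_combination (‖K‖ * (Real.sqrt (Real.sqrt n ^ 2) + Real.sqrt n)) * Real.sqrt_sq hsn.le
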